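/- arXiv:2105.04265 — 3 statements merged into one kernel-verified Lean document; each statement's English description precedes it below -/
import Mathlib

section
/- For any function g:[0,∞)→[0,∞) tending to infinity at infinity and any two slowly varying functions h, h':[0,∞)→[0,∞), there exists a function f:[0,∞)→[0,∞) such that f(x)→∞, f(x)/x→0, f(x)g(x)/x→∞ as x→∞, and both h(x)/h(f(x))→1 and h'(x)/h'(f(x))→1 as x→∞. -/
open Filter

/-- Lemma 1 (slowly varying adjustment): for any `g → ∞` and slowly varying `h, h'`
there is `f` with `f → ∞`, `f(x)/x → 0`, `f(x)g(x)/x → ∞`, and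
`h(x)/h(f(x)) → 1`, `h'(x)/h'(f(x)) → 1`. -/
theorem stmt0 (g h h' : ℝ → ℝ)
    (hg0 : ∀ x ≥ 0, 0 ≤ g x) (hh0 : ∀ x ≥ 0, 0 ≤ h x) (hh'0 : ∀ x ≥ 0, 0 ≤ h' x)
    (hg : Tendsto g atTop atTop)
    (hh : ∀ l > (0:ℝ), Tendsto (fun x => h (l * x) / h x) atTop (nhds 1))
    (hh' : ∀ l > (0:ℝ), Tendsto (fun x => h' (l * x) / h' x) atTop (nhds 1)) :
    ∃ f : ℝ → ℝ, (∀ x ≥ 0, 0 ≤ f x) ∧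
      Tendsto f atTop atTop ∧
      Tendsto (fun x => f x / x) atTop (nhds 0) ∧
      Tendsto (fun x => f x * g x / x) atTop atTop ∧
      Tendsto (fun x => h x / h (f x)) atTop (nhds 1) ∧
      Tendsto (fun x => h' x / h' (f x)) atTop (nhds 1) := by
  classical
  have key : ∀ n : ℕ, ∃ B : ℝ, ∀ x, B ≤ x →
      |h (((n:ℝ)+1)⁻¹ * x) / h x - 1| < ((n:ℝ)+1)⁻¹ ∧
      |h' (((n:ℝ)+1)⁻¹ * x) / h' x - 1| < ((n:ℝ)+1)⁻¹ ∧ ((n:ℝ)+1)^2 ≤ g x := by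
    intro n
    have hl : (0:ℝ) < ((n:ℝ)+1)⁻¹ := by positivity
    have E1 : ∀ᶠ x in atTop, |h (((n:ℝ)+1)⁻¹ * x) / h x - 1| < ((n:ℝ)+1)⁻¹ := by
      have := Metric.tendsto_nhds.mp (hh _ hl) _ hl
      simpa [Real.dist_eq] using this
    have E2 : ∀ᶠ x in atTop, |h' (((n:ℝ)+1)⁻¹ * x) / h' x - 1| < ((n:ℝ)+1)⁻¹ := by
      have := Metric.tendsto_nhds.mp (hh' _ hl) _ hl
      simpa [Real.dist_eq] using this
    have E3 : ∀ᶠ x in atTop, ((n:ℝ)+1)^2 ≤ g x := hg.eventually_ge_atTop _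
    obtain ⟨B, hB⟩ := eventually_atTop.mp ((E1.and E2).and E3)
    exact ⟨B, fun x hx => ⟨(hB x hx).1.1, (hB x hx).1.2, (hB x hx).2⟩⟩
  choose B hB using key
  set a : ℕ → ℝ := fun n =>
    Nat.rec 0 (fun m am => max (B m) (max (am + 1) (((m:ℝ)+1)^2))) n with ha_def
  have haS : ∀ n, a (n+1) = max (B n) (max (a n + 1) (((n:ℝ)+1)^2)) := fun n => rfl
  have ha0 : a 0 = 0 := rfl
  have hstep : ∀ n, a n + 1 ≤ a (n+1) := by
    intro n; rw [haS]; exact le_max_of_le_right (le_max_left _ _)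
  have hmono : StrictMono a := strictMono_nat_of_lt_succ (fun n => by have := hstep n; linarith)
  have haB : ∀ n, B n ≤ a (n+1) := fun n => by rw [haS]; exact le_max_left _ _
  have hasq : ∀ n : ℕ, ((n:ℝ)+1)^2 ≤ a (n+1) := fun n => by
    rw [haS]; exact le_max_of_le_right (le_max_right _ _)
  have ha_ge : ∀ n : ℕ, (n:ℝ) ≤ a n := by
    intro n; induction n with
    | zero => simp [ha0]
    | succ m ih => have := hstep m; push_cast; linarith
  have hex : ∀ x : ℝ, ∃ n, x < a n := by
    intro x
    obtain ⟨n, hn⟩ := exists_nat_gt x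
    exact ⟨n, hn.trans_le (ha_ge n)⟩
  set N : ℝ → ℕ := fun x => sInf {n | x < a n} - 1 with hN_def
  have hm_mem : ∀ x, x < a (sInf {n | x < a n}) := fun x => Nat.sInf_mem (hex x)
  have hm_pos : ∀ x, 0 ≤ x → 1 ≤ sInf {n | x < a n} := by
    intro x hx
    rcases Nat.eq_zero_or_pos (sInf {n | x < a n}) with h0 | h1
    · exfalso; have := hm_mem x; rw [h0, ha0] at this; linarith
    · exact h1
  have haN_le : ∀ x, 0 ≤ x → a (N x) ≤ x := by
    intro x hx
    by_contra H
    push_neg at H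
    have h1 := Nat.sInf_le (show N x ∈ {n | x < a n} from H)
    have h2 := hm_pos x hx
    have h3 : N x = sInf {n | x < a n} - 1 := rfl
    omega
  have hN_ge : ∀ n x, a n ≤ x → n ≤ N x := by
    intro n x hnx
    have hnot : ∀ k ≤ n, k ∉ {m | x < a m} := by
      intro k hk hmem
      exact absurd ((hmono.monotone hk).trans hnx) (not_le.2 hmem)
    have hm : n + 1 ≤ sInf {m | x < a m} := by
      by_contra H
      push_neg at H
      exact hnot _ (Nat.lt_succ_iff.mp H) (Nat.sInf_mem (hex x))
    have h3 : N x = sInf {m | x < a m} - 1 := rfl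
    omega
  have hN_tendsto : Tendsto N atTop atTop := by
    rw [tendsto_atTop]
    intro b
    filter_upwards [eventually_ge_atTop (a b)] with x hx using hN_ge b x hx
  set f : ℝ → ℝ := fun x => x / (N x : ℝ) with hf_def
  -- main pointwise estimates
  have main : ∀ x, a 1 ≤ x → 0 ≤ x →
      (1 ≤ N x ∧ ((N x : ℝ)) ≤ f x ∧
       |h (f x) / h x - 1| < ((N x : ℝ))⁻¹ ∧
       |h' (f x) / h' x - 1| < ((N x : ℝ))⁻¹ ∧
       ((N x : ℝ))^2 ≤ g x) := by
    intro x hx1 hx0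
    have hn1 : 1 ≤ N x := hN_ge 1 x hx1
    set n := N x with hn_def
    have hsp : n - 1 + 1 = n := Nat.succ_pred_eq_of_pos hn1
    have hnR : (1:ℝ) ≤ (n:ℝ) := by exact_mod_cast hn1
    have hnpos : (0:ℝ) < (n:ℝ) := by linarith
    have hcast : ((n - 1 : ℕ):ℝ) + 1 = (n:ℝ) := by
      rw [Nat.cast_sub hn1]; ring
    have hax : a n ≤ x := haN_le x hx0
    have hBx : B (n-1) ≤ x := by
      have h1 : B (n-1) ≤ a (n-1+1) := haB (n-1)
      rw [hsp] at h1; linarith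
    obtain ⟨H1, H2, H3⟩ := hB (n-1) x hBx
    rw [hcast] at H1 H2 H3
    have hfx : f x = ((n:ℝ))⁻¹ * x := by
      show x / (n:ℝ) = (n:ℝ)⁻¹ * x
      rw [div_eq_inv_mul]
    have hxsq : ((n:ℝ))^2 ≤ x := by
      have h2 := hasq (n-1)
      rw [hsp] at h2
      rw [hcast] at h2
      linarith
    refine ⟨hn1, ?_, by rwa [hfx], by rwa [hfx], H3⟩
    · rw [hfx, le_inv_mul_iff₀ hnpos]
      calc (n:ℝ) * n = (n:ℝ)^2 := by ring
        _ ≤ x := hxsq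
  have hElarge : ∀ᶠ x in atTop, a 1 ≤ x ∧ 0 ≤ x :=
    (eventually_ge_atTop (a 1)).and (eventually_ge_atTop 0)
  refine ⟨f, ?_, ?_, ?_, ?_, ?_, ?_⟩
  · intro x hx
    exact div_nonneg hx (Nat.cast_nonneg _)
  · -- f → ∞
    rw [tendsto_atTop]
    intro b
    filter_upwards [hElarge, hN_tendsto.eventually_ge_atTop ⌈b⌉₊] with x hx hNx
    obtain ⟨hn1, hfn, -⟩ := main x hx.1 hx.2
    calc b ≤ (⌈b⌉₊ : ℝ) := Nat.le_ceil b
      _ ≤ (N x : ℝ) := by exact_mod_cast hNx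
      _ ≤ f x := hfn
  · -- f x / x → 0
    have hT : Tendsto (fun x => ((N x : ℝ))⁻¹) atTop (nhds 0) :=
      tendsto_inv_atTop_zero.comp (tendsto_natCast_atTop_atTop.comp hN_tendsto)
    refine hT.congr' ?_
    filter_upwards [eventually_gt_atTop (max (a 1) 0)] with x hx
    have hx1 : a 1 ≤ x := le_of_lt (lt_of_le_of_lt (le_max_left _ _) hx)
    have hx0 : (0:ℝ) < x := lt_of_le_of_lt (le_max_right _ _) hx
    obtain ⟨hn1, -, -⟩ := main x hx1 hx0.le
    show ((N x : ℝ))⁻¹ = f x / x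
    show ((N x : ℝ))⁻¹ = x / (N x : ℝ) / x
    rw [div_div, mul_comm, ← div_div, div_self hx0.ne', one_div]
  · -- f x * g x / x → ∞
    rw [tendsto_atTop]
    intro b
    filter_upwards [eventually_gt_atTop (max (a 1) 0),
      hN_tendsto.eventually_ge_atTop ⌈b⌉₊] with x hx hNx
    have hx1 : a 1 ≤ x := le_of_lt (lt_of_le_of_lt (le_max_left _ _) hx)
    have hx0 : (0:ℝ) < x := lt_of_le_of_lt (le_max_right _ _) hx
    obtain ⟨hn1, -, -, -, hgx⟩ := main x hx1 hx0.le
    have hnR : (1:ℝ) ≤ (N x : ℝ) := by exact_mod_cast hn1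
    have hnpos : (0:ℝ) < (N x : ℝ) := by linarith
    have hfxx : f x / x = ((N x : ℝ))⁻¹ := by
      show x / (N x : ℝ) / x = ((N x : ℝ))⁻¹
      rw [div_div, mul_comm, ← div_div, div_self hx0.ne', one_div]
    have heq : f x * g x / x = ((N x : ℝ))⁻¹ * g x := by
      rw [mul_div_right_comm, hfxx]
    rw [heq]
    calc b ≤ (⌈b⌉₊ : ℝ) := Nat.le_ceil b
      _ ≤ (N x : ℝ) := by exact_mod_cast hNx
      _ = ((N x : ℝ))⁻¹ * ((N x : ℝ))^2 := by field_simp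
      _ ≤ ((N x : ℝ))⁻¹ * g x := by
          apply mul_le_mul_of_nonneg_left hgx (by positivity)
  · -- h x / h (f x) → 1
    have Th : Tendsto (fun x => h (f x) / h x) atTop (nhds 1) := by
      rw [Metric.tendsto_nhds]
      intro ε hε
      obtain ⟨n0, hn0⟩ := exists_nat_one_div_lt hε
      filter_upwards [hElarge, hN_tendsto.eventually_ge_atTop (n0+1)] with x hx hNx
      obtain ⟨hn1, -, Hh, -, -⟩ := main x hx.1 hx.2
      rw [Real.dist_eq]
      refine Hh.trans_le ?_
      rw [← one_div]
      apply le_of_lt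
      refine lt_of_le_of_lt ?_ hn0
      apply one_div_le_one_div_of_le (by positivity)
      exact_mod_cast hNx
    have := Th.inv₀ one_ne_zero
    simp only [inv_one] at this
    refine this.congr ?_
    intro x
    rw [inv_div]
  · -- h' x / h' (f x) → 1
    have Th : Tendsto (fun x => h' (f x) / h' x) atTop (nhds 1) := by
      rw [Metric.tendsto_nhds]
      intro ε hε
      obtain ⟨n0, hn0⟩ := exists_nat_one_div_lt hε
      filter_upwards [hElarge, hN_tendsto.eventually_ge_atTop (n0+1)] with x hx hNx
      obtain ⟨hn1, -, -, Hh, -⟩ := main x hx.1 hx.2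
      rw [Real.dist_eq]
      refine Hh.trans_le ?_
      rw [← one_div]
      apply le_of_lt
      refine lt_of_le_of_lt ?_ hn0
      apply one_div_le_one_div_of_le (by positivity)
      exact_mod_cast hNx
    have := Th.inv₀ one_ne_zero
    simp only [inv_one] at this
    refine this.congr ?_
    intro x
    rw [inv_div]
end

section
/- Let ξ₁,…,ξₙ be i.i.d. nonnegative with tail F̄ regularly varying of index −1, G the integrated tail, Sₖ = ξ₁+…+ξₖ. If (xₙ) satisfies liminf xₙ/(nG(xₙ)) > 0 and aₙ → a ∈ (0,∞), then max over 1 ≤ k ≤ n of P(Sₖ − kG(xₙ) ≥ aₙxₙ) = O(n F̄(xₙ)) as n → ∞. -/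
/-!
Truncate at level `xₙ`, i.e. put `ηᵢ = min ξᵢ xₙ`. Off the event that some `ξᵢ` with `i < k`
exceeds `xₙ`, whose probability is at most `k F̄(xₙ)`, the sum `Sₖ` equals the truncated sum, and
the mean of the latter is at most `k G(xₙ)`. Chebyshev's inequality bounds what is left by
`k E[η₀²] / (aₙxₙ)²`, and since `F̄` is regularly varying of index `-1`, a Karamata-type estimate
gives `E[η₀²] = O(xₙ² F̄(xₙ))`. That estimate only holds for large arguments; the liminf condition
forces `F̄(xₙ) = O(1/n)`, hence `xₙ → ∞`.
-/

open MeasureTheory ProbabilityTheory Filter Set Topology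

namespace Antitone

variable {F : ℝ → ℝ}

theorem integrableOn_Ioc (hF : Antitone F) (a b : ℝ) : IntegrableOn F (Ioc a b) :=
  (hF.locallyIntegrable.integrableOn_isCompact isCompact_Icc).mono_set Ioc_subset_Icc_self

theorem setIntegral_Ioc_le_mul (hF : Antitone F) {a b : ℝ} (hab : a ≤ b) :
    ∫ t in Ioc a b, F t ≤ (b - a) * F a := by
  calc ∫ t in Ioc a b, F t ≤ ∫ _ in Ioc a b, F a :=
        setIntegral_mono_on (hF.integrableOn_Ioc a b) (integrableOn_const measure_Ioc_lt_top.ne)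
          measurableSet_Ioc fun t ht => hF ht.1.le
    _ = (b - a) * F a := by rw [setIntegral_const, Real.volume_real_Ioc_of_le hab, smul_eq_mul]

theorem mul_le_setIntegral_Ioc (hF : Antitone F) {a b : ℝ} (hab : a ≤ b) :
    (b - a) * F b ≤ ∫ t in Ioc a b, F t := by
  calc (b - a) * F b = ∫ _ in Ioc a b, F b := by
        rw [setIntegral_const, Real.volume_real_Ioc_of_le hab, smul_eq_mul]
    _ ≤ ∫ t in Ioc a b, F t :=
        setIntegral_mono_on (integrableOn_const measure_Ioc_lt_top.ne) (hF.integrableOn_Ioc a b)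
          measurableSet_Ioc fun t ht => hF ht.2

theorem setIntegral_Ioc_add (hF : Antitone F) {a b c : ℝ} (hab : a ≤ b) (hbc : b ≤ c) :
    ∫ t in Ioc a c, F t = (∫ t in Ioc a b, F t) + ∫ t in Ioc b c, F t := by
  rw [← setIntegral_union (Ioc_disjoint_Ioc_of_le le_rfl) measurableSet_Ioc
    (hF.integrableOn_Ioc a b) (hF.integrableOn_Ioc b c), Ioc_union_Ioc_eq_Ioc hab hbc]

/- Induction over the ranges `[D, 4ⁿD)`: the integral over `(y/4, y]` is at most
`(3/4) y F(y/4)`, and `K < 4` leaves room for the constant to reproduce itself. -/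
theorem exists_setIntegral_Ioc_le_mul (hF : Antitone F) (hpos : ∀ t, 0 < F t) {K : ℝ}
    (hK : K < 4) (hquarter : ∀ᶠ y in atTop, F (y / 4) ≤ K * F y) :
    ∃ M > 0, ∀ᶠ y in atTop, ∫ t in Ioc 0 y, F t ≤ M * (y * F y) := by
  obtain ⟨D₀, hD₀⟩ := eventually_atTop.mp hquarter
  set D := max D₀ 1
  have hD : 0 < D := lt_of_lt_of_le one_pos (le_max_right _ _)
  set M := max (3 * K / (4 - K)) (F 0 / F (4 * D))
  have hM_quarter : (M + 3) * K ≤ 4 * M := by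
    have : 3 * K / (4 - K) ≤ M := le_max_left _ _
    rw [div_le_iff₀ (by linarith)] at this
    linarith
  have hM_base : F 0 ≤ M * F (4 * D) :=
    (div_le_iff₀ (hpos _)).mp (le_max_right _ _)
  have hM : 0 < M := lt_of_lt_of_le (div_pos (hpos 0) (hpos _)) (le_max_right _ _)
  have hdyadic : ∀ n : ℕ, ∀ y, D ≤ y → y < 4 ^ n * D → ∫ t in Ioc 0 y, F t ≤ M * (y * F y) := by
    intro n
    induction n with
    | zero => intro y hy hy'; rw [pow_zero, one_mul] at hy'; linarith
    | succ n ih =>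
      intro y hy hy'
      have hy0 : 0 ≤ y := hD.le.trans hy
      rcases lt_or_ge y (4 * D) with hsmall | hlarge
      · calc ∫ t in Ioc 0 y, F t ≤ (y - 0) * F 0 := hF.setIntegral_Ioc_le_mul hy0
          _ ≤ y * (M * F y) := by
            rw [sub_zero]
            exact mul_le_mul_of_nonneg_left
              (hM_base.trans (mul_le_mul_of_nonneg_left (hF hsmall.le) hM.le)) hy0
          _ = M * (y * F y) := by ring
      · have hq : F (y / 4) ≤ K * F y := hD₀ y (by linarith [le_max_left D₀ 1])
        have hrec := ih (y / 4) (by linarith) (by rw [pow_succ] at hy'; linarith)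
        have hFy := (hpos y).le
        calc ∫ t in Ioc 0 y, F t
            = (∫ t in Ioc 0 (y / 4), F t) + ∫ t in Ioc (y / 4) y, F t :=
              hF.setIntegral_Ioc_add (by linarith) (by linarith)
          _ ≤ M * (y / 4 * F (y / 4)) + (y - y / 4) * F (y / 4) :=
              add_le_add hrec (hF.setIntegral_Ioc_le_mul (by linarith))
          _ = (M + 3) / 4 * y * F (y / 4) := by ring
          _ ≤ (M + 3) / 4 * y * (K * F y) := by gcongr
          _ ≤ M * (y * F y) := by nlinarith [mul_nonneg hy0 hFy]
  refine ⟨M, hM, eventually_atTop.mpr ⟨D, fun y hy => ?_⟩⟩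
  obtain ⟨n, hn⟩ := pow_unbounded_of_one_lt (y / D) (by norm_num : (1 : ℝ) < 4)
  exact hdyadic n y hy ((div_lt_iff₀ hD).mp hn)

theorem exists_setIntegral_Ioc_sq_le_mul (hF : Antitone F) (hpos : ∀ t, 0 < F t)
    (hdouble : ∀ᶠ x in atTop, 3 / 8 * F x ≤ F (2 * x)) :
    ∃ M > 0, ∀ᶠ x in atTop, ∫ t in Ioc 0 (x ^ 2), F √t ≤ M * (x ^ 2 * F x) := by
  have hquarter : ∀ᶠ y in atTop, F √(y / 4) ≤ 8 / 3 * F √y := by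
    have hsqrt : Tendsto (fun y => √(y / 4)) atTop atTop :=
      Real.tendsto_sqrt_atTop.comp (tendsto_id.atTop_div_const (by norm_num))
    filter_upwards [hsqrt.eventually hdouble, eventually_ge_atTop 0] with y hy hy0
    have : 2 * √(y / 4) = √y := by
      rw [Real.sqrt_div hy0, show (4 : ℝ) = 2 ^ 2 by norm_num, Real.sqrt_sq (by norm_num)]
      ring
    rw [this] at hy
    linarith
  obtain ⟨M, hM, hbound⟩ := exists_setIntegral_Ioc_le_mul
    (fun s t hst => hF (Real.sqrt_le_sqrt hst)) (fun t => hpos _) (by norm_num) hquarter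
  refine ⟨M, hM, ?_⟩
  filter_upwards [(tendsto_pow_atTop two_ne_zero).eventually hbound, eventually_ge_atTop 0]
    with x hx hx0
  rwa [Real.sqrt_sq hx0] at hx

end Antitone

section RegularVariation

variable {F ℓ : ℝ → ℝ}

theorem pos_of_slowlyVarying (hF : Antitone F) (hF0 : ∀ t, 0 ≤ F t)
    (htail : ∀ x > (0 : ℝ), F x = ℓ x / x)
    (hℓ : Tendsto (fun x => ℓ (2 * x) / ℓ x) atTop (𝓝 1)) (t : ℝ) : 0 < F t := by
  refine (hF0 t).lt_of_ne fun hFt => ?_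
  have hzero : Tendsto (fun x => ℓ (2 * x) / ℓ x) atTop (𝓝 0) := by
    refine tendsto_const_nhds.congr' ?_
    filter_upwards [eventually_ge_atTop (max t 1)] with x hx
    have hx0 : 0 < x := one_pos.trans_le ((le_max_right _ _).trans hx)
    have hFx : F x = 0 := le_antisymm (hFt ▸ hF ((le_max_left _ _).trans hx)) (hF0 x)
    rw [htail x hx0, div_eq_zero_iff] at hFx
    rcases hFx with h | h
    · simp [h]
    · exact absurd h hx0.ne'
  exact one_ne_zero (tendsto_nhds_unique hℓ hzero)

-- `F(2x)/F(x) → 1/2`; any constant above `1/4` would do for `exists_setIntegral_Ioc_le_mul`.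
theorem eventually_le_two_mul_of_slowlyVarying (hF0 : ∀ t, 0 ≤ F t)
    (htail : ∀ x > (0 : ℝ), F x = ℓ x / x)
    (hℓ : Tendsto (fun x => ℓ (2 * x) / ℓ x) atTop (𝓝 1)) :
    ∀ᶠ x in atTop, 3 / 8 * F x ≤ F (2 * x) := by
  filter_upwards [hℓ.eventually (eventually_ge_nhds (by norm_num : (3 / 4 : ℝ) < 1)),
    eventually_gt_atTop 0] with x hratio hx
  have hℓx : ℓ x = x * F x := by rw [htail x hx]; field_simp
  have hℓ2x : ℓ (2 * x) = 2 * x * F (2 * x) := by rw [htail (2 * x) (by positivity)]; field_simp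
  have hℓpos : 0 < ℓ x := by
    refine (hℓx ▸ mul_nonneg hx.le (hF0 x)).lt_of_ne fun h => ?_
    rw [← h, div_zero] at hratio
    norm_num at hratio
  have := (le_div_iff₀ hℓpos).mp hratio
  rw [hℓx, hℓ2x] at this
  nlinarith

end RegularVariation

section Truncation

variable {Ω : Type*} [MeasurableSpace Ω] {μ : Measure Ω}

theorem antitone_measureReal_le [IsFiniteMeasure μ] (Y : Ω → ℝ) :
    Antitone fun x => μ.real {ω | x ≤ Y ω} :=
  fun _ _ hst => measureReal_mono fun _ hω => hst.trans hω

theorem integral_le_setIntegral_Ioc_of_measureReal_le [IsFiniteMeasure μ] {f : Ω → ℝ}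
    (hf : AEStronglyMeasurable f μ) (hf0 : ∀ ω, 0 ≤ f ω) {B : ℝ} (hfB : ∀ ω, f ω ≤ B)
    {H : ℝ → ℝ} (hH : Antitone H) (hle : ∀ t ∈ Ioc 0 B, μ.real {ω | t ≤ f ω} ≤ H t) :
    ∫ ω, f ω ∂μ ≤ ∫ t in Ioc 0 B, H t := by
  have hint : Integrable f μ :=
    .of_bound hf B (.of_forall fun ω => by rw [Real.norm_of_nonneg (hf0 ω)]; exact hfB ω)
  rw [hint.integral_eq_integral_Ioc_meas_le (.of_forall hf0) (.of_forall hfB)]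
  exact setIntegral_mono_on ((antitone_measureReal_le f).integrableOn_Ioc 0 B)
    (hH.integrableOn_Ioc 0 B) measurableSet_Ioc hle

variable [IsProbabilityMeasure μ] {Y : Ω → ℝ} {X : ℝ}

theorem integral_min_le_setIntegral_Ioc (hY : Measurable Y) (hY0 : ∀ ω, 0 ≤ Y ω) (hX : 0 ≤ X) :
    ∫ ω, min (Y ω) X ∂μ ≤ ∫ t in Ioc 0 X, μ.real {ω | t ≤ Y ω} :=
  integral_le_setIntegral_Ioc_of_measureReal_le (hY.min measurable_const).aestronglyMeasurable
    (fun ω => le_min (hY0 ω) hX) (fun ω => min_le_right _ _) (antitone_measureReal_le Y)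
    fun t _ => measureReal_mono fun ω (hω : t ≤ min (Y ω) X) => (le_min_iff.mp hω).1

theorem integral_min_sq_le_setIntegral_Ioc (hY : Measurable Y) (hY0 : ∀ ω, 0 ≤ Y ω)
    (hX : 0 ≤ X) :
    ∫ ω, min (Y ω) X ^ 2 ∂μ ≤ ∫ t in Ioc 0 (X ^ 2), μ.real {ω | √t ≤ Y ω} := by
  refine integral_le_setIntegral_Ioc_of_measureReal_le
    ((hY.min measurable_const).pow_const 2).aestronglyMeasurable (fun ω => sq_nonneg _)
    (fun ω => pow_le_pow_left₀ (le_min (hY0 ω) hX) (min_le_right _ _) 2)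
    (fun s t hst => antitone_measureReal_le Y (Real.sqrt_le_sqrt hst)) fun t ht => ?_
  refine measureReal_mono fun ω (hω : t ≤ min (Y ω) X ^ 2) => ?_
  calc √t ≤ √(min (Y ω) X ^ 2) := Real.sqrt_le_sqrt hω
    _ = min (Y ω) X := Real.sqrt_sq (le_min (hY0 ω) hX)
    _ ≤ Y ω := min_le_left _ _

end Truncation

section IIDSums

variable {Ω : Type*} [MeasurableSpace Ω] {μ : Measure Ω}

theorem measureReal_biUnion_range_lt_le {ξ : ℕ → Ω → ℝ}
    (hident : ∀ i, IdentDistrib (ξ i) (ξ 0) μ μ) (X : ℝ) (k : ℕ) :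
    μ.real (⋃ i ∈ Finset.range k, {ω | X < ξ i ω}) ≤ k * μ.real {ω | X < ξ 0 ω} := by
  calc μ.real (⋃ i ∈ Finset.range k, {ω | X < ξ i ω})
      ≤ ∑ i ∈ Finset.range k, μ.real {ω | X < ξ i ω} := measureReal_biUnion_finset_le _ _
    _ = ∑ _i ∈ Finset.range k, μ.real {ω | X < ξ 0 ω} := by
      refine Finset.sum_congr rfl fun i _ => ?_
      simp only [measureReal_def]
      exact congrArg ENNReal.toReal ((hident i).measure_mem_eq (measurableSet_Ioi (a := X)))
    _ = k * μ.real {ω | X < ξ 0 ω} := by simp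

variable [IsProbabilityMeasure μ]

theorem measureReal_le_abs_sum_sub_integral_le {η : ℕ → Ω → ℝ} (hL2 : ∀ i, MemLp (η i) 2 μ)
    (hindep : iIndepFun η μ) (hident : ∀ i, IdentDistrib (η i) (η 0) μ μ) (k : ℕ) {t : ℝ}
    (ht : 0 < t) :
    μ.real {ω | t ≤ |(∑ i ∈ Finset.range k, η i) ω - μ[∑ i ∈ Finset.range k, η i]|}
      ≤ k * variance (η 0) μ / t ^ 2 := by
  have hvar : variance (∑ i ∈ Finset.range k, η i) μ = k * variance (η 0) μ := by
    rw [IndepFun.variance_sum (fun i _ => hL2 i) fun i _ j _ hij => hindep.indepFun hij,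
      Finset.sum_congr rfl fun i _ => (hident i).variance_eq]
    simp
  rw [← hvar, measureReal_def]
  exact ENNReal.toReal_le_of_le_ofReal (div_nonneg (variance_nonneg _ _) (sq_nonneg _))
    (meas_ge_le_variance_div_sq (memLp_finsetSum' _ fun i _ => hL2 i) ht)

theorem measureReal_le_sum_sub_mul_le {ξ : ℕ → Ω → ℝ} (hmeas : ∀ i, Measurable (ξ i))
    (hindep : iIndepFun ξ μ) (hident : ∀ i, IdentDistrib (ξ i) (ξ 0) μ μ)
    (hξ0 : ∀ i ω, 0 ≤ ξ i ω) {X t m : ℝ} (hX : 0 ≤ X) (ht : 0 < t)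
    (hm : ∫ ω, min (ξ 0 ω) X ∂μ ≤ m) (k : ℕ) :
    μ.real {ω | t ≤ ∑ i ∈ Finset.range k, ξ i ω - k * m}
      ≤ k * (μ.real {ω | X < ξ 0 ω} + (∫ ω, min (ξ 0 ω) X ^ 2 ∂μ) / t ^ 2) := by
  set η : ℕ → Ω → ℝ := fun i ω => min (ξ i ω) X
  have hηL2 : ∀ i, MemLp (η i) 2 μ := fun i =>
    .of_bound ((hmeas i).min measurable_const).aestronglyMeasurable X <| .of_forall fun ω => by
      rw [Real.norm_of_nonneg (le_min (hξ0 i ω) hX)]; exact min_le_right _ _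
  have hηident : ∀ i, IdentDistrib (η i) (η 0) μ μ := fun i =>
    (hident i).comp (measurable_id.min measurable_const)
  have hmean : μ[∑ i ∈ Finset.range k, η i] ≤ k * m := by
    rw [Finset.sum_fn, integral_finsetSum _ fun i _ => (hηL2 i).integrable one_le_two,
      Finset.sum_congr rfl fun i _ => (hηident i).integral_eq]
    simpa using mul_le_mul_of_nonneg_left hm k.cast_nonneg
  have hsub : {ω | t ≤ ∑ i ∈ Finset.range k, ξ i ω - k * m}
      ⊆ (⋃ i ∈ Finset.range k, {ω | X < ξ i ω})
        ∪ {ω | t ≤ |(∑ i ∈ Finset.range k, η i) ω - μ[∑ i ∈ Finset.range k, η i]|} := by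
    intro ω hω
    by_cases hbig : ω ∈ ⋃ i ∈ Finset.range k, {ω | X < ξ i ω}
    · exact Or.inl hbig
    simp only [mem_iUnion, not_exists] at hbig
    have hsum : ∑ i ∈ Finset.range k, ξ i ω = (∑ i ∈ Finset.range k, η i) ω := by
      rw [Finset.sum_apply]
      exact Finset.sum_congr rfl fun i hi => (min_eq_left (not_lt.mp (hbig i hi))).symm
    have hω : t ≤ ∑ i ∈ Finset.range k, ξ i ω - k * m := hω
    exact Or.inr (show t ≤ |_| by rw [← hsum]; exact le_abs.mpr (Or.inl (by linarith)))
  calc μ.real {ω | t ≤ ∑ i ∈ Finset.range k, ξ i ω - k * m}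
      ≤ k * μ.real {ω | X < ξ 0 ω} + k * variance (η 0) μ / t ^ 2 :=
        (measureReal_mono hsub).trans <| (measureReal_union_le _ _).trans <|
          add_le_add (measureReal_biUnion_range_lt_le hident X k)
            (measureReal_le_abs_sum_sub_integral_le hηL2
              (hindep.comp _ fun _ => measurable_id.min measurable_const) hηident k ht)
    _ ≤ k * μ.real {ω | X < ξ 0 ω} + k * (∫ ω, min (ξ 0 ω) X ^ 2 ∂μ) / t ^ 2 := by
        gcongr
        simpa using variance_le_expectation_sq (hηL2 0).aestronglyMeasurable
    _ = k * (μ.real {ω | X < ξ 0 ω} + (∫ ω, min (ξ 0 ω) X ^ 2 ∂μ) / t ^ 2) := by ring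

theorem measureReal_le_sum_sub_mul_integral_tail_le {ξ : ℕ → Ω → ℝ}
    (hmeas : ∀ i, Measurable (ξ i)) (hindep : iIndepFun ξ μ)
    (hident : ∀ i, IdentDistrib (ξ i) (ξ 0) μ μ) (hξ0 : ∀ i ω, 0 ≤ ξ i ω) (F : ℝ → ℝ)
    (hF : ∀ x, F x = μ.real {ω | x ≤ ξ 0 ω}) {X t : ℝ} (hX : 0 ≤ X) (ht : 0 < t) (k : ℕ) :
    μ.real {ω | t ≤ ∑ i ∈ Finset.range k, ξ i ω - k * ∫ s in Ioc 0 X, F s}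
      ≤ k * (F X + (∫ s in Ioc 0 (X ^ 2), F √s) / t ^ 2) := by
  have hF' : F = fun x => μ.real {ω | x ≤ ξ 0 ω} := funext hF
  refine (measureReal_le_sum_sub_mul_le hmeas hindep hident hξ0 hX ht
    (by simpa [hF'] using integral_min_le_setIntegral_Ioc (hmeas 0) (hξ0 0) hX) k).trans ?_
  gcongr
  · rw [hF]
    exact measureReal_mono fun ω hω => (show X < ξ 0 ω from hω).le
  · simpa [hF'] using integral_min_sq_le_setIntegral_Ioc (hmeas 0) (hξ0 0) hX

end IIDSums

theorem Antitone.tendsto_atTop_of_tendsto_nhds_zero {α : Type*} {l : Filter α} {F : ℝ → ℝ}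
    (hF : Antitone F) (hpos : ∀ t, 0 < F t) {x : α → ℝ}
    (h : Tendsto (fun n => F (x n)) l (𝓝 0)) : Tendsto x l atTop :=
  tendsto_atTop.mpr fun R =>
    (h.eventually (gt_mem_nhds (hpos R))).mono fun _ hn => (hF.reflect_lt hn).le

theorem tendsto_atTop_of_le_div_mul {F G : ℝ → ℝ} (hF : Antitone F) (hpos : ∀ t, 0 < F t)
    (hFG : ∀ y > 0, y * F y ≤ G y) {x : ℕ → ℝ} (hx : ∀ n, 0 < x n) {c : ℝ} (hc : 0 < c)
    (hcx : ∀ᶠ n in atTop, c ≤ x n / (n * G (x n))) : Tendsto x atTop atTop := by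
  refine hF.tendsto_atTop_of_tendsto_nhds_zero hpos <|
    tendsto_of_tendsto_of_tendsto_of_le_of_le' tendsto_const_nhds
      (tendsto_const_div_atTop_nhds_zero_nat c⁻¹) (.of_forall fun n => (hpos _).le) ?_
  filter_upwards [hcx, eventually_gt_atTop 0] with n hn hn0
  have hn0 : (0 : ℝ) < n := Nat.cast_pos.mpr hn0
  have hG := hFG (x n) (hx n)
  have hGpos : 0 < G (x n) := (mul_pos (hx n) (hpos _)).trans_le hG
  rw [le_div_iff₀ (by positivity)] at hn
  have hcnF : c * n * F (x n) ≤ 1 := by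
    refine le_of_mul_le_mul_left ?_ (hx n)
    nlinarith [mul_le_mul_of_nonneg_left hG (by positivity : 0 ≤ c * n)]
  calc F (x n) = c * n * F (x n) * (c⁻¹ / n) := by field_simp
    _ ≤ 1 * (c⁻¹ / n) := by gcongr
    _ = c⁻¹ / n := one_mul _

theorem stmt9_general {Ω : Type*} [MeasurableSpace Ω] (μ : Measure Ω) [IsProbabilityMeasure μ]
    (ξ : ℕ → Ω → ℝ) (hmeas : ∀ i, Measurable (ξ i))
    (hindep : iIndepFun ξ μ)
    (hident : ∀ i, IdentDistrib (ξ i) (ξ 0) μ μ)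
    (hξ0 : ∀ i ω, 0 ≤ ξ i ω)
    (ℓ Fbar G : ℝ → ℝ)
    (hFbar : ∀ x, Fbar x = (μ {ω | x ≤ ξ 0 ω}).toReal)
    (htail : ∀ x > (0:ℝ), Fbar x = ℓ x / x)
    (hslow : ∀ l > (0:ℝ), Tendsto (fun x => ℓ (l * x) / ℓ x) atTop (nhds 1))
    (hG : ∀ x, G x = ∫ t in Set.Ioc 0 x, Fbar t)
    (x a : ℕ → ℝ) (hx : ∀ n, 0 < x n)
    (hliminf : ∃ c > (0:ℝ), ∀ᶠ (n : ℕ) in atTop, c ≤ x n / ((n : ℝ) * G (x n)))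
    (A : ℝ) (hA : 0 < A) (ha : Tendsto a atTop (nhds A)) :
    ∃ C > (0:ℝ), ∀ᶠ (n : ℕ) in atTop, ∀ k, 1 ≤ k → k ≤ n →
      (μ {ω | a n * x n ≤ (∑ i ∈ Finset.range k, ξ i ω) - (k : ℝ) * G (x n)}).toReal
        ≤ C * (n : ℝ) * Fbar (x n) := by
  have hFbar' : Fbar = fun x => μ.real {ω | x ≤ ξ 0 ω} := funext hFbar
  have hanti : Antitone Fbar := hFbar' ▸ antitone_measureReal_le (ξ 0)
  have hF0 : ∀ t, 0 ≤ Fbar t := fun t => hFbar' ▸ measureReal_nonneg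
  have hpos := pos_of_slowlyVarying hanti hF0 htail (hslow 2 two_pos)
  obtain ⟨M, hM, hsecond⟩ := hanti.exists_setIntegral_Ioc_sq_le_mul hpos
    (eventually_le_two_mul_of_slowlyVarying hF0 htail (hslow 2 two_pos))
  obtain ⟨c, hc, hcx⟩ := hliminf
  have hxlim : Tendsto x atTop atTop := tendsto_atTop_of_le_div_mul hanti hpos
    (fun y hy => by simpa [hG] using hanti.mul_le_setIntegral_Ioc hy.le) hx hc hcx
  refine ⟨1 + 4 * M / A ^ 2, by positivity, ?_⟩
  filter_upwards [ha.eventually (eventually_ge_nhds (half_lt_self hA)),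
    hxlim.eventually hsecond] with n han hMn k _ hkn
  set X := x n
  have hX : 0 < X := hx n
  have hkn' : (k : ℝ) ≤ n := by exact_mod_cast hkn
  calc (μ {ω | a n * X ≤ (∑ i ∈ Finset.range k, ξ i ω) - (k : ℝ) * G X}).toReal
      ≤ k * (Fbar X + (∫ s in Ioc 0 (X ^ 2), Fbar √s) / (a n * X) ^ 2) := by
        rw [hG]
        exact measureReal_le_sum_sub_mul_integral_tail_le hmeas hindep hident hξ0 Fbar hFbar
          hX.le (mul_pos (by linarith) hX) k
    _ ≤ n * (Fbar X + M * (X ^ 2 * Fbar X) / (A / 2 * X) ^ 2) := by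
        have hint : 0 ≤ ∫ s in Ioc 0 (X ^ 2), Fbar √s := setIntegral_nonneg measurableSet_Ioc
          fun _ _ => hF0 _
        gcongr
        · exact add_nonneg (hF0 X) (by positivity)
        · exact mul_nonneg hM.le (mul_nonneg (sq_nonneg _) (hF0 _))
    _ = (1 + 4 * M / A ^ 2) * n * Fbar X := by
        field_simp
        ring

/-- Corollary 1: `max_{1 ≤ k ≤ n} P(Sₖ - kG(xₙ) ≥ aₙxₙ) = O(n F̄(xₙ))`. -/
theorem stmt9 {Ω : Type*} [MeasurableSpace Ω] (μ : Measure Ω) [IsProbabilityMeasure μ]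
    (ξ : ℕ → Ω → ℝ) (hmeas : ∀ i, Measurable (ξ i))
    (hindep : iIndepFun ξ μ)
    (hident : ∀ i, IdentDistrib (ξ i) (ξ 0) μ μ)
    (hξ0 : ∀ i ω, 0 ≤ ξ i ω)
    (ℓ Fbar G : ℝ → ℝ)
    (hFbar : ∀ x, Fbar x = (μ {ω | x ≤ ξ 0 ω}).toReal)
    (htail : ∀ x > (0:ℝ), Fbar x = ℓ x / x)
    (hslow : ∀ l > (0:ℝ), Tendsto (fun x => ℓ (l * x) / ℓ x) atTop (nhds 1))
    (hG : ∀ x, G x = ∫ t in Set.Ioc 0 x, Fbar t)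
    (x a : ℕ → ℝ) (hx : ∀ n, 0 < x n) (hapos : ∀ n, 0 < a n)
    (hliminf : ∃ c > (0:ℝ), ∀ᶠ (n : ℕ) in atTop, c ≤ x n / ((n : ℝ) * G (x n)))
    (A : ℝ) (hA : 0 < A) (ha : Tendsto a atTop (nhds A)) :
    ∃ C > (0:ℝ), ∀ᶠ (n : ℕ) in atTop, ∀ k, 1 ≤ k → k ≤ n →
      (μ {ω | a n * x n ≤ (∑ i ∈ Finset.range k, ξ i ω) - (k : ℝ) * G (x n)}).toReal
        ≤ C * (n : ℝ) * Fbar (x n) :=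
  stmt9_general μ ξ hmeas hindep hident hξ0 ℓ Fbar G hFbar htail hslow hG x a hx hliminf A hA ha
end

section
/- Let ξ₁,ξ₂,… be i.i.d. nonnegative with tail F̄ regularly varying of index −1 and integrated tail G. If (xₙ) is a positive sequence with limsupₙ xₙ/(nG(xₙ)) = 0 (and xₙ → ∞), then P(Sₙ ≥ xₙ) → 1 as n → ∞. -/
open Filter MeasureTheory ProbabilityTheory Finset Topology

/-!
Truncate the summands at the level `xₙ`. By the layer-cake formula the truncations `min ξᵢ xₙ` have
mean `G(xₙ)`, and since they lie in `[0, xₙ]` their variance is at most `xₙ G(xₙ)`. Their sum is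
below `Sₙ`, so Chebyshev's inequality bounds `P(Sₙ < xₙ)` by `r/(1 - r)²` with
`r = xₙ/(n G(xₙ)) → 0`.
-/

namespace ProbabilityTheory

variable {Ω : Type*} [MeasurableSpace Ω] {μ : Measure Ω} {X : Ω → ℝ} {c : ℝ}

lemma memLp_min_const [IsFiniteMeasure μ] (hX : Measurable X) (hX0 : ∀ ω, 0 ≤ X ω)
    (hc : 0 ≤ c) (p : ENNReal) : MemLp (fun ω => min (X ω) c) p μ := by
  refine (memLp_top_of_bound (hX.min measurable_const).aestronglyMeasurable c
    (ae_of_all _ fun ω => ?_)).mono_exponent le_top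
  rw [Real.norm_of_nonneg (le_min (hX0 ω) hc)]
  exact min_le_right _ _

lemma integrable_min_const [IsFiniteMeasure μ] (hX : Measurable X) (hX0 : ∀ ω, 0 ≤ X ω)
    (hc : 0 ≤ c) : Integrable (fun ω => min (X ω) c) μ :=
  memLp_one_iff_integrable.mp (memLp_min_const hX hX0 hc 1)

lemma integral_min_const_eq_integral_Ioc_measureReal [IsFiniteMeasure μ] (hX : Measurable X)
    (hX0 : ∀ ω, 0 ≤ X ω) (hc : 0 ≤ c) :
    ∫ ω, min (X ω) c ∂μ = ∫ t in Set.Ioc 0 c, μ.real {ω | t ≤ X ω} := by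
  rw [(integrable_min_const hX hX0 hc).integral_eq_integral_Ioc_meas_le
    (ae_of_all _ fun ω => le_min (hX0 ω) hc) (ae_of_all _ fun ω => min_le_right _ _)]
  refine setIntegral_congr_fun measurableSet_Ioc fun t ht => ?_
  simp only [le_min_iff, ht.2, and_true]

lemma mul_measureReal_le_integral_min_const [IsFiniteMeasure μ] (hX : Measurable X)
    (hX0 : ∀ ω, 0 ≤ X ω) {t : ℝ} (htc : t ≤ c) (hc : 0 ≤ c) :
    t * μ.real {ω | t ≤ X ω} ≤ ∫ ω, min (X ω) c ∂μ := by
  simpa only [le_min_iff, htc, and_true] using mul_meas_ge_le_integral_of_nonneg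
    (ae_of_all _ fun ω => le_min (hX0 ω) hc) (integrable_min_const hX hX0 hc) t

lemma variance_min_const_le [IsProbabilityMeasure μ] (hX : Measurable X) (hX0 : ∀ ω, 0 ≤ X ω)
    (hc : 0 ≤ c) : variance (fun ω => min (X ω) c) μ ≤ c * ∫ ω, min (X ω) c ∂μ := by
  have hY := memLp_min_const (μ := μ) hX hX0 hc 2
  calc variance (fun ω => min (X ω) c) μ ≤ μ[(fun ω => min (X ω) c) ^ 2] :=
        variance_le_expectation_sq hY.aestronglyMeasurable
    _ ≤ ∫ ω, c * min (X ω) c ∂μ := by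
        refine integral_mono hY.integrable_sq ((integrable_min_const hX hX0 hc).const_mul c)
          fun ω => ?_
        simp only [Pi.pow_apply, sq]
        exact mul_le_mul_of_nonneg_right (min_le_right _ _) (le_min (hX0 ω) hc)
    _ = c * ∫ ω, min (X ω) c ∂μ := integral_const_mul _ _

lemma measureReal_sum_lt_le [IsProbabilityMeasure μ] {ξ : ℕ → Ω → ℝ}
    (hmeas : ∀ i, Measurable (ξ i)) (hindep : iIndepFun ξ μ)
    (hident : ∀ i, IdentDistrib (ξ i) (ξ 0) μ μ) (hξ0 : ∀ i ω, 0 ≤ ξ i ω) {M m : ℝ}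
    (hM : 0 ≤ M) (hm : ∫ ω, min (ξ 0 ω) M ∂μ = m) {n : ℕ} (hMn : M < n * m) :
    μ.real {ω | ∑ i ∈ range n, ξ i ω < M} ≤ M / (n * m) / (1 - M / (n * m)) ^ 2 := by
  set Y : ℕ → Ω → ℝ := fun i ω => min (ξ i ω) M
  set S : Ω → ℝ := ∑ i ∈ range n, Y i
  have hmin : Measurable fun y : ℝ => min y M := measurable_id.min measurable_const
  have hY : ∀ i, MemLp (Y i) 2 μ := fun i => memLp_min_const (hmeas i) (hξ0 i) hM 2
  have hidY : ∀ i, IdentDistrib (Y i) (Y 0) μ μ := fun i => (hident i).comp hmin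
  have hmean : μ[S] = n * m := by
    simp only [S, Finset.sum_apply]
    rw [integral_finsetSum _ fun i _ => (hY i).integrable one_le_two,
      sum_congr rfl fun i _ => (hidY i).integral_eq, sum_const, card_range, nsmul_eq_mul]
    exact congrArg _ hm
  have hvar : variance S μ ≤ n * (M * m) := by
    have hindY : iIndepFun Y μ := hindep.comp (fun _ y => min y M) fun _ => hmin
    rw [IndepFun.variance_sum (fun i _ => hY i) fun i _ j _ hij => hindY.indepFun hij,
      sum_congr rfl fun i _ => (hidY i).variance_eq, sum_const, card_range, nsmul_eq_mul]
    exact mul_le_mul_of_nonneg_left (hm ▸ variance_min_const_le (hmeas 0) (hξ0 0) hM) n.cast_nonneg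
  have hgap : 0 < n * m - M := sub_pos.mpr hMn
  have hsub : {ω | ∑ i ∈ range n, ξ i ω < M} ⊆ {ω | n * m - M ≤ |S ω - μ[S]|} := by
    intro ω hω
    have hSξ : S ω ≤ ∑ i ∈ range n, ξ i ω := by
      simp only [S, Finset.sum_apply]
      exact sum_le_sum fun i _ => min_le_left _ _
    simp only [Set.mem_ofPred_eq, hmean] at hω ⊢
    exact le_abs.mpr (Or.inr (by linarith))
  have hnm : (n : ℝ) * m ≠ 0 := (hM.trans_lt hMn).ne'
  calc μ.real {ω | ∑ i ∈ range n, ξ i ω < M} ≤ μ.real {ω | n * m - M ≤ |S ω - μ[S]|} :=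
        measureReal_mono hsub
    _ ≤ variance S μ / (n * m - M) ^ 2 :=
        ENNReal.toReal_le_of_le_ofReal (div_nonneg (variance_nonneg _ _) (sq_nonneg _))
          (meas_ge_le_variance_div_sq (memLp_finsetSum' _ fun i _ => hY i) hgap)
    _ ≤ n * (M * m) / (n * m - M) ^ 2 := by gcongr
    _ = M / (n * m) / (1 - M / (n * m)) ^ 2 := by
        rw [one_sub_div hnm]
        field_simp

lemma tendsto_measureReal_le_sum [IsProbabilityMeasure μ] {ξ : ℕ → Ω → ℝ}
    (hmeas : ∀ i, Measurable (ξ i)) (hindep : iIndepFun ξ μ)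
    (hident : ∀ i, IdentDistrib (ξ i) (ξ 0) μ μ) (hξ0 : ∀ i ω, 0 ≤ ξ i ω) {M : ℕ → ℝ}
    (hM : ∀ᶠ n in atTop, 0 ≤ M n ∧ 0 < ∫ ω, min (ξ 0 ω) (M n) ∂μ)
    (hratio : Tendsto (fun n : ℕ => M n / (n * ∫ ω, min (ξ 0 ω) (M n) ∂μ)) atTop (𝓝 0)) :
    Tendsto (fun n => μ.real {ω | M n ≤ ∑ i ∈ range n, ξ i ω}) atTop (𝓝 1) := by
  set r : ℕ → ℝ := fun n => M n / (n * ∫ ω, min (ξ 0 ω) (M n) ∂μ)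
  have hbad : ∀ᶠ n in atTop, μ.real {ω | ∑ i ∈ range n, ξ i ω < M n} ≤ r n / (1 - r n) ^ 2 := by
    filter_upwards [hM, eventually_ge_atTop 1, hratio.eventually_lt_const one_pos]
      with n ⟨hM0, hm⟩ hn hrn
    have hnm : 0 < n * ∫ ω, min (ξ 0 ω) (M n) ∂μ := mul_pos (by exact_mod_cast hn) hm
    exact measureReal_sum_lt_le hmeas hindep hident hξ0 hM0 rfl ((div_lt_one hnm).mp hrn)
  have hr : Tendsto (fun n => r n / (1 - r n) ^ 2) atTop (𝓝 0) := by
    have h := hratio.div (((tendsto_const_nhds (x := (1 : ℝ))).sub hratio).pow 2) (by norm_num)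
    rwa [sub_zero, one_pow, div_one] at h
  have hcompl : ∀ n, μ.real {ω | M n ≤ ∑ i ∈ range n, ξ i ω}
      = 1 - μ.real {ω | ∑ i ∈ range n, ξ i ω < M n} := fun n => by
    rw [← probReal_compl_eq_one_sub
      (measurableSet_lt (Finset.measurable_sum _ fun i _ => hmeas i) measurable_const)]
    simp only [Set.compl_ofPred, not_lt]
  simpa only [hcompl, sub_zero] using (tendsto_const_nhds (x := (1 : ℝ))).sub
    (squeeze_zero' (Eventually.of_forall fun _ => measureReal_nonneg) hbad hr)

end ProbabilityTheory

theorem stmt11_general {Ω : Type*} [MeasurableSpace Ω] (μ : Measure Ω) [IsProbabilityMeasure μ]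
    (ξ : ℕ → Ω → ℝ) (hmeas : ∀ i, Measurable (ξ i))
    (hindep : iIndepFun ξ μ)
    (hident : ∀ i, IdentDistrib (ξ i) (ξ 0) μ μ)
    (hξ0 : ∀ i ω, 0 ≤ ξ i ω)
    (ℓ Fbar G : ℝ → ℝ)
    (hFbar : ∀ x, Fbar x = (μ {ω | x ≤ ξ 0 ω}).toReal)
    (htail : ∀ x > (0:ℝ), Fbar x = ℓ x / x)
    (hslow : ∀ l > (0:ℝ), Tendsto (fun x => ℓ (l * x) / ℓ x) atTop (nhds 1))
    (hG : ∀ x, G x = ∫ t in Set.Ioc 0 x, Fbar t)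
    (x : ℕ → ℝ) (hxinf : Tendsto x atTop atTop)
    (hzero : Tendsto (fun (n : ℕ) => x n / ((n : ℝ) * G (x n))) atTop (nhds 0)) :
    Tendsto (fun (n : ℕ) =>
        (μ {ω | x n ≤ ∑ i ∈ Finset.range n, ξ i ω}).toReal) atTop (nhds 1) := by
  have hG_eq : ∀ c, 0 ≤ c → G c = ∫ ω, min (ξ 0 ω) c ∂μ := fun c hc => by
    simp only [hG, hFbar, integral_min_const_eq_integral_Ioc_measureReal (hmeas 0) (hξ0 0) hc,
      measureReal_def]
  obtain ⟨x₀, hx₀, hℓx₀⟩ : ∃ x₀ > 0, ℓ x₀ ≠ 0 := by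
    obtain ⟨y, hy, hy0⟩ :=
      (((hslow 1 one_pos).eventually_ne one_ne_zero).and (eventually_gt_atTop 0)).exists
    exact ⟨y, hy0, fun h => hy (by simp [h])⟩
  have htail_pos : 0 < μ.real {ω | x₀ ≤ ξ 0 ω} := by
    refine measureReal_nonneg.lt_of_ne (Ne.symm ?_)
    rw [measureReal_def, ← hFbar, htail x₀ hx₀]
    exact div_ne_zero hℓx₀ hx₀.ne'
  have hmean_pos : ∀ c, x₀ ≤ c → 0 < ∫ ω, min (ξ 0 ω) c ∂μ := fun c hc =>
    (mul_pos hx₀ htail_pos).trans_le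
      (mul_measureReal_le_integral_min_const (hmeas 0) (hξ0 0) hc (hx₀.le.trans hc))
  have hx_large : ∀ᶠ n in atTop, x₀ ≤ x n := hxinf.eventually_ge_atTop x₀
  refine tendsto_measureReal_le_sum hmeas hindep hident hξ0 ?_ ?_
  · filter_upwards [hx_large] with n hn
    exact ⟨hx₀.le.trans hn, hmean_pos _ hn⟩
  · refine hzero.congr' ?_
    filter_upwards [hx_large] with n hn
    rw [hG_eq _ (hx₀.le.trans hn)]

/-- Theorem 1(c): if `xₙ → ∞` and `xₙ/(n G(xₙ)) → 0` (i.e. `limsup = 0` for this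
nonnegative ratio), then `P(Sₙ ≥ xₙ) → 1`. -/
theorem stmt11 {Ω : Type*} [MeasurableSpace Ω] (μ : Measure Ω) [IsProbabilityMeasure μ]
    (ξ : ℕ → Ω → ℝ) (hmeas : ∀ i, Measurable (ξ i))
    (hindep : iIndepFun ξ μ)
    (hident : ∀ i, IdentDistrib (ξ i) (ξ 0) μ μ)
    (hξ0 : ∀ i ω, 0 ≤ ξ i ω)
    (ℓ Fbar G : ℝ → ℝ)
    (hFbar : ∀ x, Fbar x = (μ {ω | x ≤ ξ 0 ω}).toReal)
    (htail : ∀ x > (0:ℝ), Fbar x = ℓ x / x)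
    (hslow : ∀ l > (0:ℝ), Tendsto (fun x => ℓ (l * x) / ℓ x) atTop (nhds 1))
    (hG : ∀ x, G x = ∫ t in Set.Ioc 0 x, Fbar t)
    (x : ℕ → ℝ) (hx : ∀ n, 0 < x n) (hxinf : Tendsto x atTop atTop)
    (hzero : Tendsto (fun (n : ℕ) => x n / ((n : ℝ) * G (x n))) atTop (nhds 0)) :
    Tendsto (fun (n : ℕ) =>
        (μ {ω | x n ≤ ∑ i ∈ Finset.range n, ξ i ω}).toReal) atTop (nhds 1) :=
  stmt11_general μ ξ hmeas hindep hident hξ0 ℓ Fbar G hFbar htail hslow hG x hxinf hzero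
end
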